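/- Let X be a CAT(0) cube complex in which no hyperplane (with its induced cubical structure) has an extremal vertex. Then for any vertex v and any two transverse hyperplanes u, w adjacent to v, there exists a hyperplane t adjacent to v, distinct from u and w, such that t is transverse to u but not transverse to w. -/

import Mathlib

open SimpleGraph

variable {V : Type*}

/-- A median graph: combinatorial model of (the 1-skeleton of) a CAT(0) cube complex. -/
def IsMedianGraph (G : SimpleGraph V) : Prop :=
  G.Connected ∧ ∀ x y z : V, ∃! m : V,
    G.dist x m + G.dist m y = G.dist x y ∧
    G.dist x m + G.dist m z = G.dist x z ∧
    G.dist y m + G.dist m z = G.dist y z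

/-- Djoković–Winkler relation on oriented edges of a median graph; hyperplanes are its classes. -/
def Theta (G : SimpleGraph V) (e f : V × V) : Prop :=
  G.dist e.1 f.1 + G.dist e.2 f.2 ≠ G.dist e.1 f.2 + G.dist e.2 f.1

/-- A hyperplane, identified with the set of (oriented) edges crossing it. -/
def IsHyperplane (G : SimpleGraph V) (h : Set (V × V)) : Prop :=
  ∃ e : V × V, G.Adj e.1 e.2 ∧ h = {f | G.Adj f.1 f.2 ∧ Theta G e f}

/-- The hyperplane `h` is adjacent to the vertex `v` (i.e. `v` lies in the carrier of `h`). -/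
def AdjTo (G : SimpleGraph V) (h : Set (V × V)) (v : V) : Prop :=
  ∃ e ∈ h, e.1 = v ∨ e.2 = v

/-- `Wv G v`: the set of hyperplanes adjacent to `v`. -/
def Wv (G : SimpleGraph V) (v : V) : Set (Set (V × V)) :=
  {h | IsHyperplane G h ∧ AdjTo G h v}

/-- Two hyperplanes are in contact if their carriers share a vertex. -/
def Contact (G : SimpleGraph V) (h h' : Set (V × V)) : Prop :=
  ∃ v : V, AdjTo G h v ∧ AdjTo G h' v

/-- Two hyperplanes are transverse if they cross a common square. -/
def Transverse (G : SimpleGraph V) (h h' : Set (V × V)) : Prop :=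
  ∃ a b c d : V, (a, b) ∈ h ∧ (c, d) ∈ h ∧ (a, c) ∈ h' ∧ (b, d) ∈ h' ∧
    G.Adj a b ∧ G.Adj c d ∧ G.Adj a c ∧ G.Adj b d

/-- A clique in the contact graph: a set of hyperplanes whose carriers pairwise intersect. -/
def IsContactClique (G : SimpleGraph V) (C : Set (Set (V × V))) : Prop :=
  (∀ h ∈ C, IsHyperplane G h) ∧ ∀ h ∈ C, ∀ h' ∈ C, h ≠ h' → Contact G h h'

/-- A maximal clique in the contact graph. -/
def IsMaxContactClique (G : SimpleGraph V) (C : Set (Set (V × V))) : Prop :=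
  IsContactClique G C ∧ ∀ C', IsContactClique G C' → C ⊆ C' → C' = C

/-- The link of `v` is a cone, i.e. `v` is an extremal vertex. -/
def LinkIsCone (G : SimpleGraph V) (v : V) : Prop :=
  ∃ h ∈ Wv G v, ∀ h' ∈ Wv G v, h' ≠ h → Transverse G h h'

/-- Uniform local finiteness. -/
def UnifLocFinite (G : SimpleGraph V) : Prop :=
  ∃ N : ℕ, ∀ v : V, (G.neighborSet v).Finite ∧ (G.neighborSet v).ncard ≤ N

abbrev Hyp (G : SimpleGraph V) := {h : Set (V × V) // IsHyperplane G h}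

/-- The contact graph `𝒞(X)`. -/
def contactGraph (G : SimpleGraph V) : SimpleGraph (Hyp G) where
  Adj h h' := h ≠ h' ∧ Contact G h.1 h'.1
  symm := by
    constructor
    rintro h h' ⟨hne, v, hv, hv'⟩
    exact ⟨hne.symm, v, hv', hv⟩
  loopless := by constructor; rintro h ⟨hne, -⟩; exact hne rfl

/-- `Ical G w` = I(w): the hyperplanes whose carrier contains the carrier of `w`,
i.e. the intersection of the sets `Wv G v` over all vertices `v` adjacent to `w`. -/
def Ical (G : SimpleGraph V) (w : Set (V × V)) : Set (Set (V × V)) :=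
  {u | IsHyperplane G u ∧ ∀ v : V, AdjTo G w v → AdjTo G u v}

/-- `Ical0 G w` = I⁰(w): the hyperplanes with the same carrier as `w`. -/
def Ical0 (G : SimpleGraph V) (w : Set (V × V)) : Set (Set (V × V)) :=
  {u | u ∈ Ical G w ∧ w ∈ Ical G u}

/-- The action of a cubical automorphism on sets of edges (e.g. hyperplanes). -/
def hmap (G : SimpleGraph V) (φ : G ≃g G) (h : Set (V × V)) : Set (V × V) :=
  (fun e : V × V => (φ e.1, φ e.2)) '' h

/-- `π` is the vertex permutation induced by the contact-graph automorphism `ψ` via the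
correspondence between vertices and maximal cliques (`ρ(ψ) = π`). -/
def InducesPerm (G : SimpleGraph V) (ψ : contactGraph G ≃g contactGraph G)
    (π : Equiv.Perm V) : Prop :=
  ∀ (v : V) (h : Hyp G), h.1 ∈ Wv G v ↔ (ψ h).1 ∈ Wv G (π v)

/-- The hyperplane `u` is adjacent, inside the cube complex structure of a hyperplane `w`,
to the vertex of `w` given by the edge `e ∈ w`: `u` crosses a square containing `e`. -/
def HypAdjEdge (G : SimpleGraph V) (u : Set (V × V)) (e : V × V) : Prop :=
  ∃ c d : V, (e.1, c) ∈ u ∧ (e.2, d) ∈ u ∧ G.Adj c d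

/-- The link, in the cube complex structure of hyperplane `w`, of the vertex given by
`e ∈ w` is a cone (i.e. this vertex of `w` is extremal). -/
def HypLinkCone (G : SimpleGraph V) (w : Set (V × V)) (e : V × V) : Prop :=
  ∃ u, IsHyperplane G u ∧ u ≠ w ∧ HypAdjEdge G u e ∧
    ∀ u', IsHyperplane G u' → u' ≠ w → HypAdjEdge G u' e → u' ≠ u → Transverse G u u'

/-- No hyperplane of `X` has an extremal vertex. -/
def NoHypExtremalVertex (G : SimpleGraph V) : Prop :=
  ∀ w, IsHyperplane G w → ∀ e ∈ w, ¬ HypLinkCone G w e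


/-!
Hyperplanes of a median graph are walls: for an edge `pq`, the halfspace `{x | d(x,p) < d(x,q)}`
is convex, because a geodesic leaving it and coming back could be shortened (induction on its
length, using the median of its second vertex, its last vertex and `p`). Hence each
Djoković–Winkler class is the set of edges between a halfspace and its complement, and two
hyperplanes sharing an edge coincide.

Let `vx` be an edge dual to `u`. Since `u` and `w` are transverse, all four quadrants they cut out
are nonempty, and the median of `x`, `y` (with `vy` dual to `w`) and a vertex of the quadrant
opposite to `v` closes a square on `vx` crossed by `w`. So `w` is adjacent to the vertex `vx` of
`u`; as this vertex is not extremal, some hyperplane `t ≠ w` adjacent to it is not transverse to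
`w`. Such a `t` crosses a square on `vx`, hence is adjacent to `v` and transverse to `u`.
-/

section

variable {G : SimpleGraph V} {p q p' q' a b c x y z x' y' v : V} {u w t : Set (V × V)}

def SimpleGraph.halfspace (G : SimpleGraph V) (p q : V) : Set V := {x | G.dist x p < G.dist x q}

def SimpleGraph.wall (G : SimpleGraph V) (p q : V) : Set (V × V) :=
  {e | G.Adj e.1 e.2 ∧ (e.1 ∈ G.halfspace p q ↔ e.2 ∉ G.halfspace p q)}

theorem SimpleGraph.mem_wall_iff :
    (a, b) ∈ G.wall p q ↔ G.Adj a b ∧ (a ∈ G.halfspace p q ↔ b ∉ G.halfspace p q) :=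
  Iff.rfl

theorem SimpleGraph.mem_halfspace_iff_of_notMem_wall (hab : G.Adj a b)
    (h : (a, b) ∉ G.wall p q) : a ∈ G.halfspace p q ↔ b ∈ G.halfspace p q := by
  by_contra h'
  exact h ⟨hab, by tauto⟩

theorem SimpleGraph.Connected.exists_adj_dist_add_one_eq (hG : G.Connected) (h : x ≠ y) :
    ∃ x', G.Adj x x' ∧ G.dist x' y + 1 = G.dist x y := by
  obtain ⟨w, hw⟩ := hG.exists_walk_length_eq_dist x y
  cases w with
  | nil => exact absurd rfl h
  | @cons _ x' _ hadj w =>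
    have hle : G.dist x' y ≤ w.length := dist_le w
    have htri := hG.dist_triangle (u := x) (v := x') (w := y)
    rw [dist_eq_one_iff_adj.mpr hadj] at htri
    exact ⟨x', hadj, by simp only [Walk.length_cons] at hw; omega⟩

theorem SimpleGraph.Connected.exists_adj_mem_notMem (hG : G.Connected) {S : Set V}
    (hx : x ∈ S) (hy : y ∉ S) :
    ∃ a b, a ∈ S ∧ b ∉ S ∧ G.Adj a b ∧ G.dist x a + 1 = G.dist x b ∧
      G.dist x a + G.dist a y = G.dist x y ∧ G.dist x b + G.dist b y = G.dist x y := by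
  induction hn : G.dist x y generalizing x with
  | zero => exact absurd (hG.dist_eq_zero_iff.mp hn ▸ hx) hy
  | succ n ih =>
    obtain ⟨x', hxx', hx'⟩ := hG.exists_adj_dist_add_one_eq (fun h : x = y => hy (h ▸ hx))
    have hd : G.dist x x' = 1 := dist_eq_one_iff_adj.mpr hxx'
    by_cases hx'S : x' ∈ S
    · obtain ⟨a, b, ha, hb, hab, hx'ab, hx'ay, hx'by⟩ := ih hx'S (by omega)
      have := hG.dist_triangle (u := x) (v := x') (w := a)
      have := hG.dist_triangle (u := x) (v := x') (w := b)
      have := hG.dist_triangle (u := x) (v := a) (w := y)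
      have := hG.dist_triangle (u := x) (v := b) (w := y)
      exact ⟨a, b, ha, hb, hab, by omega, by omega, by omega⟩
    · exact ⟨x, x', hx, hx'S, hxx', by simp [hd], by simp [hn], by omega⟩

namespace IsMedianGraph

theorem dist_eq_add_one_or (hG : IsMedianGraph G) (hpq : G.Adj p q) (x : V) :
    G.dist x q = G.dist x p + 1 ∨ G.dist x p = G.dist x q + 1 := by
  obtain ⟨m, hp, hq, hpq'⟩ := (hG.2 x p q).exists
  rw [dist_eq_one_iff_adj.mpr hpq] at hpq'
  obtain rfl | rfl : m = p ∨ m = q := by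
    rcases Nat.eq_zero_or_pos (G.dist p m) with h | h
    · exact .inl (hG.1.dist_eq_zero_iff.mp h).symm
    · exact .inr (hG.1.dist_eq_zero_iff.mp (by omega))
  · left; rw [dist_eq_one_iff_adj.mpr hpq] at hq; omega
  · right; rw [dist_eq_one_iff_adj.mpr hpq.symm] at hp; omega

theorem notMem_halfspace_iff (hG : IsMedianGraph G) (hpq : G.Adj p q) :
    x ∉ G.halfspace p q ↔ x ∈ G.halfspace q p := by
  simp only [halfspace, Set.mem_ofPred_eq]
  rcases hG.dist_eq_add_one_or hpq x with h | h <;> omega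

theorem dist_eq_of_adj_of_mem_halfspace (hG : IsMedianGraph G)
    (hab : G.Adj a b) (ha : a ∈ G.halfspace q p) (hb : b ∈ G.halfspace p q) :
    G.dist b p = G.dist a q ∧ G.dist b q = G.dist a p := by
  simp only [halfspace, Set.mem_ofPred_eq] at ha hb
  have := hG.dist_eq_add_one_or hab p
  have := hG.dist_eq_add_one_or hab q
  have := G.dist_comm (u := a) (v := p)
  have := G.dist_comm (u := a) (v := q)
  have := G.dist_comm (u := b) (v := p)
  have := G.dist_comm (u := b) (v := q)
  omega

theorem eq_of_adj_of_adj_of_mem_halfspace (hG : IsMedianGraph G) (hpq : G.Adj p q)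
    (hab : G.Adj a b) (hac : G.Adj a c) (ha : a ∈ G.halfspace q p)
    (hb : b ∈ G.halfspace p q) (hc : c ∈ G.halfspace p q) : b = c := by
  by_contra hbc
  obtain ⟨hbp, hbq⟩ := hG.dist_eq_of_adj_of_mem_halfspace hab ha hb
  obtain ⟨hcp, hcq⟩ := hG.dist_eq_of_adj_of_mem_halfspace hac ha hc
  have hap := hG.dist_eq_add_one_or hpq a
  simp only [halfspace, Set.mem_ofPred_eq] at ha
  have hba : G.dist b a = 1 := dist_eq_one_iff_adj.mpr hab.symm
  have hac1 : G.dist a c = 1 := dist_eq_one_iff_adj.mpr hac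
  have hca : G.dist c a = 1 := dist_eq_one_iff_adj.mpr hac.symm
  have hbc2 : G.dist b c = 2 := by
    have := hG.1.dist_triangle (u := b) (v := a) (w := c)
    have := hG.1.pos_dist_of_ne hbc
    have : ¬ G.Adj b c := fun h => by
      have := hG.dist_eq_add_one_or h p
      rw [G.dist_comm (u := p), G.dist_comm (u := p)] at this
      omega
    have : G.dist b c ≠ 1 := fun h => this (dist_eq_one_iff_adj.mp h)
    omega
  -- `a` and the median `m` of `b, c, p` are both medians of `b, c, q`, but `m` is closer to `p`
  obtain ⟨m, hbmc, hbmp, hcmp⟩ := (hG.2 b c p).exists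
  have hmc : G.dist c m = G.dist m c := dist_comm
  have hbm : G.dist b m = 1 := by omega
  have hmq : G.dist m q = G.dist a q := by
    have := hG.dist_eq_add_one_or hpq m
    have := hG.1.dist_triangle (u := b) (v := m) (w := q)
    omega
  have ham : a = m := (hG.2 b c q).unique (y₁ := a) (y₂ := m)
    ⟨by omega, by omega, by omega⟩ ⟨by omega, by omega, by omega⟩
  subst ham
  omega

theorem exists_shorter_crossing (hG : IsMedianGraph G) (hpq : G.Adj p q)
    (hy : y ∈ G.halfspace p q) (hx' : x' ∈ G.halfspace q p)
    (hxx' : G.Adj x x') (hyy' : G.Adj y y') (hn : G.dist x' y' + 2 = G.dist x y)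
    (hyp : G.dist x' y + G.dist y p ≠ G.dist x' p) :
    ∃ a b, a ∈ G.halfspace q p ∧ b ∈ G.halfspace p q ∧ G.Adj b a ∧
      G.dist x' a + 2 = G.dist x b ∧ G.dist x b < G.dist x y := by
  have hxx'1 : G.dist x x' = 1 := dist_eq_one_iff_adj.mpr hxx'
  have hx'y : G.dist x' y + 1 = G.dist x y := by
    have := hG.1.dist_triangle (u := x) (v := x') (w := y)
    have := hG.1.dist_triangle (u := x') (v := y') (w := y)
    rw [G.dist_comm (u := y'), dist_eq_one_iff_adj.mpr hyy'] at this
    omega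
  obtain ⟨m, hx'my, hx'mp, hymp⟩ := (hG.2 x' y p).exists
  have hm : m ∈ G.halfspace p q := by
    have := hG.1.dist_triangle (u := y) (v := m) (w := q)
    simp only [halfspace, Set.mem_ofPred_eq] at hy ⊢
    omega
  have hmy : G.dist m y ≠ 0 := fun h => by
    rw [hG.1.dist_eq_zero_iff.mp h] at hx'mp
    omega
  have hm' : m ∉ G.halfspace q p := (hG.notMem_halfspace_iff hpq.symm).mpr hm
  obtain ⟨a, b, ha, hb, hab, hx'ab, hx'am, hx'bm⟩ := hG.1.exists_adj_mem_notMem hx' hm'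
  have := hG.1.dist_triangle (u := x) (v := x') (w := b)
  have := hG.1.dist_triangle (u := x) (v := b) (w := y)
  have := hG.1.dist_triangle (u := b) (v := m) (w := y)
  exact ⟨a, b, ha, (hG.notMem_halfspace_iff hpq.symm).mp hb, hab.symm, by omega, by omega⟩

/-- `x x' ⋯ y' y` is not a geodesic: no geodesic leaves a halfspace and comes back. -/
theorem dist_add_two_ne_of_adj_of_mem_halfspace (hG : IsMedianGraph G) (hpq : G.Adj p q)
    (hx : x ∈ G.halfspace p q) (hy : y ∈ G.halfspace p q) (hx' : x' ∈ G.halfspace q p)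
    (hy' : y' ∈ G.halfspace q p) (hxx' : G.Adj x x') (hyy' : G.Adj y y') :
    G.dist x' y' + 2 ≠ G.dist x y := by
  induction hn : G.dist x y using Nat.strong_induction_on generalizing x x' y y' with
  | _ n ih =>
  intro hn'
  by_cases hyp : G.dist x' y + G.dist y p = G.dist x' p
  · by_cases hxp : G.dist y' x + G.dist x p = G.dist y' p
    · have hxx'1 : G.dist x x' = 1 := dist_eq_one_iff_adj.mpr hxx'
      have hyy'1 : G.dist y y' = 1 := dist_eq_one_iff_adj.mpr hyy'
      have := hG.1.dist_triangle (u := x') (v := x) (w := p)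
      have := hG.1.dist_triangle (u := y') (v := y) (w := p)
      have := hG.1.dist_triangle (u := x) (v := x') (w := y)
      have := hG.1.dist_triangle (u := y) (v := y') (w := x)
      have := G.dist_comm (u := x) (v := x')
      have := G.dist_comm (u := y) (v := y')
      have := G.dist_comm (u := x) (v := y)
      obtain rfl := hG.1.dist_eq_zero_iff.mp (show G.dist x' y' = 0 by omega)
      obtain rfl := hG.eq_of_adj_of_adj_of_mem_halfspace hpq hxx'.symm hyy'.symm hx' hx hy
      simp only [SimpleGraph.dist_self] at hn
      omega
    · have hsymm : G.dist y' x' + 2 = G.dist y x := by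
        rw [G.dist_comm (u := y'), G.dist_comm (u := y), hn, hn']
      obtain ⟨a, b, ha, hb, hba, h, hlt⟩ :=
        hG.exists_shorter_crossing hpq hx hy' hyy' hxx' hsymm hxp
      exact ih _ (hlt.trans_eq (G.dist_comm.trans hn)) hy hb hy' ha hyy' hba rfl h
  · obtain ⟨a, b, ha, hb, hba, h, hlt⟩ :=
      hG.exists_shorter_crossing hpq hy hx' hxx' hyy' (hn'.trans hn.symm) hyp
    exact ih _ (hn ▸ hlt) hx hb hx' ha hxx' hba rfl h

theorem mem_halfspace_of_dist_add_dist_eq (hG : IsMedianGraph G) (hpq : G.Adj p q)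
    (hx : x ∈ G.halfspace p q) (hy : y ∈ G.halfspace p q)
    (hxzy : G.dist x z + G.dist z y = G.dist x y) : z ∈ G.halfspace p q := by
  by_contra hz
  obtain ⟨a, b, ha, hb, hab, hxab, hxaz, hxbz⟩ := hG.1.exists_adj_mem_notMem hx hz
  obtain ⟨c, d, hc, hd, hcd, hycd, hycz, hydz⟩ := hG.1.exists_adj_mem_notMem hy hz
  have := hG.1.dist_triangle (u := a) (v := z) (w := c)
  have := hG.1.dist_triangle (u := b) (v := z) (w := d)
  have := hG.1.dist_triangle (u := x) (v := a) (w := y)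
  have := hG.1.dist_triangle (u := a) (v := c) (w := y)
  have := hG.1.dist_triangle (u := x) (v := b) (w := y)
  have := hG.1.dist_triangle (u := b) (v := d) (w := y)
  have := G.dist_comm (u := z) (v := y)
  have := G.dist_comm (u := z) (v := c)
  have := G.dist_comm (u := z) (v := d)
  have := G.dist_comm (u := c) (v := y)
  have := G.dist_comm (u := d) (v := y)
  rw [hG.notMem_halfspace_iff hpq] at hb hd
  exact hG.dist_add_two_ne_of_adj_of_mem_halfspace hpq ha hc hb hd hab hcd (by omega)

theorem mem_halfspace_iff_of_dist_add_dist_eq (hG : IsMedianGraph G) (hpq : G.Adj p q)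
    (hxy : x ∈ G.halfspace p q ↔ y ∈ G.halfspace p q)
    (hxzy : G.dist x z + G.dist z y = G.dist x y) :
    z ∈ G.halfspace p q ↔ x ∈ G.halfspace p q := by
  by_cases hx : x ∈ G.halfspace p q
  · exact iff_of_true (hG.mem_halfspace_of_dist_add_dist_eq hpq hx (hxy.mp hx) hxzy) hx
  · have hx' := (hG.notMem_halfspace_iff hpq).mp hx
    have hy' := (hG.notMem_halfspace_iff hpq).mp (hxy.not.mp hx)
    exact iff_of_false ((hG.notMem_halfspace_iff hpq).mpr
      (hG.mem_halfspace_of_dist_add_dist_eq hpq.symm hx' hy' hxzy)) hx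

theorem halfspace_subset_of_adj (hG : IsMedianGraph G) (hpq : G.Adj p q) (hab : G.Adj a b)
    (ha : a ∈ G.halfspace p q) (hb : b ∉ G.halfspace p q) :
    G.halfspace a b ⊆ G.halfspace p q := by
  intro z hz
  by_contra hz'
  have hzab : G.dist z a + G.dist a b = G.dist z b := by
    simp only [halfspace, Set.mem_ofPred_eq] at hz
    rw [dist_eq_one_iff_adj.mpr hab]
    rcases hG.dist_eq_add_one_or hab z with h | h <;> omega
  rw [hG.notMem_halfspace_iff hpq] at hz' hb
  exact (hG.notMem_halfspace_iff hpq).mpr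
    (hG.mem_halfspace_of_dist_add_dist_eq hpq.symm hz' hb hzab) ha

theorem halfspace_eq_of_adj (hG : IsMedianGraph G) (hpq : G.Adj p q) (hab : G.Adj a b)
    (ha : a ∈ G.halfspace p q) (hb : b ∉ G.halfspace p q) :
    G.halfspace a b = G.halfspace p q := by
  refine (hG.halfspace_subset_of_adj hpq hab ha hb).antisymm fun z hz => ?_
  have hba : G.halfspace b a ⊆ G.halfspace q p :=
    hG.halfspace_subset_of_adj hpq.symm hab.symm ((hG.notMem_halfspace_iff hpq).mp hb)
      ((hG.notMem_halfspace_iff hpq.symm).mpr ha)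
  by_contra hz'
  exact (hG.notMem_halfspace_iff hpq).mpr (hba ((hG.notMem_halfspace_iff hab).mp hz')) hz

theorem wall_comm (hG : IsMedianGraph G) (hpq : G.Adj p q) : G.wall q p = G.wall p q := by
  ext e
  simp only [wall, Set.mem_ofPred_eq, ← hG.notMem_halfspace_iff hpq]
  tauto

theorem wall_eq_of_mem (hG : IsMedianGraph G) (hpq : G.Adj p q) (h : (a, b) ∈ G.wall p q) :
    G.wall a b = G.wall p q := by
  obtain ⟨hab, hside⟩ := h
  by_cases ha : a ∈ G.halfspace p q
  · simp only [wall, hG.halfspace_eq_of_adj hpq hab ha (hside.mp ha)]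
  · have hb : b ∈ G.halfspace p q := by tauto
    rw [← hG.wall_comm hpq]
    simp only [wall, hG.halfspace_eq_of_adj hpq.symm hab ((hG.notMem_halfspace_iff hpq).mp ha)
      ((hG.notMem_halfspace_iff hpq.symm).mpr hb)]

theorem wall_eq_of_mem_of_mem (hG : IsMedianGraph G) (hpq : G.Adj p q) (hpq' : G.Adj p' q')
    (h : (a, b) ∈ G.wall p q) (h' : (a, b) ∈ G.wall p' q') : G.wall p q = G.wall p' q' := by
  rw [← hG.wall_eq_of_mem hpq h, hG.wall_eq_of_mem hpq' h']

theorem theta_iff (hG : IsMedianGraph G) (hpq : G.Adj p q) :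
    Theta G (p, q) (a, b) ↔ (a ∈ G.halfspace p q ↔ b ∉ G.halfspace p q) := by
  simp only [Theta, halfspace, Set.mem_ofPred_eq]
  rw [G.dist_comm (u := p), G.dist_comm (u := p), G.dist_comm (u := q), G.dist_comm (u := q)]
  rcases hG.dist_eq_add_one_or hpq a with h | h <;>
    rcases hG.dist_eq_add_one_or hpq b with h' | h' <;> omega

end IsMedianGraph

namespace IsHyperplane

theorem exists_eq_wall (hu : IsHyperplane G u) (hG : IsMedianGraph G) :
    ∃ p q, G.Adj p q ∧ u = G.wall p q := by
  obtain ⟨⟨p, q⟩, hpq, rfl⟩ := hu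
  exact ⟨p, q, hpq, Set.ext fun _ => and_congr_right fun _ => hG.theta_iff hpq⟩

theorem adj_of_mem (hu : IsHyperplane G u) (h : (a, b) ∈ u) : G.Adj a b := by
  obtain ⟨_, _, rfl⟩ := hu
  exact h.1

theorem eq_of_mem_of_mem (hu : IsHyperplane G u) (hw : IsHyperplane G w) (hG : IsMedianGraph G)
    (hau : (a, b) ∈ u) (haw : (a, b) ∈ w) : u = w := by
  obtain ⟨p, q, hpq, rfl⟩ := hu.exists_eq_wall hG
  obtain ⟨p', q', hpq', rfl⟩ := hw.exists_eq_wall hG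
  exact hG.wall_eq_of_mem_of_mem hpq hpq' hau haw

theorem swap_mem (hu : IsHyperplane G u) (hG : IsMedianGraph G) (h : (a, b) ∈ u) :
    (b, a) ∈ u := by
  obtain ⟨p, q, hpq, rfl⟩ := hu.exists_eq_wall hG
  obtain ⟨hab, hside⟩ := h
  exact ⟨hab.symm, by tauto⟩

theorem exists_mem_of_adjTo (hu : IsHyperplane G u) (hG : IsMedianGraph G) (h : AdjTo G u v) :
    ∃ x, (v, x) ∈ u := by
  obtain ⟨⟨a, b⟩, hab, rfl | rfl⟩ := h
  · exact ⟨b, hab⟩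
  · exact ⟨a, hu.swap_mem hG hab⟩

theorem transverse_of_hypAdjEdge (ht : IsHyperplane G t) (hu : IsHyperplane G u)
    (hG : IsMedianGraph G) (htu : t ≠ u) (hvx : (v, x) ∈ u) (h : HypAdjEdge G t (v, x)) :
    Transverse G t u := by
  obtain ⟨c, d, hvc, hxd, hcd⟩ := h
  have hvc' : (v, c) ∉ u := fun h => htu (ht.eq_of_mem_of_mem hu hG hvc h)
  have hxd' : (x, d) ∉ u := fun h => htu (ht.eq_of_mem_of_mem hu hG hxd h)
  obtain ⟨p, q, hpq, rfl⟩ := hu.exists_eq_wall hG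
  have hvc'' := mem_halfspace_iff_of_notMem_wall (ht.adj_of_mem hvc) hvc'
  have hxd'' := mem_halfspace_iff_of_notMem_wall (ht.adj_of_mem hxd) hxd'
  obtain ⟨hvx_adj, hvx_side⟩ := mem_wall_iff.mp hvx
  exact ⟨v, c, x, d, hvc, hxd, hvx, mem_wall_iff.mpr ⟨hcd, by tauto⟩, ht.adj_of_mem hvc,
    ht.adj_of_mem hxd, hvx_adj, hcd⟩

end IsHyperplane

namespace Transverse

theorem symm (h : Transverse G u w) : Transverse G w u := by
  obtain ⟨a, b, c, d, hab, hcd, hac, hbd, hab', hcd', hac', hbd'⟩ := h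
  exact ⟨a, c, b, d, hac, hbd, hab, hcd, hac', hbd', hab', hcd'⟩

theorem exists_mem_opposite_quadrant (h : Transverse G (G.wall p q) (G.wall p' q'))
    (hG : IsMedianGraph G) (hpq : G.Adj p q) (hpq' : G.Adj p' q')
    (hne : G.wall p q ≠ G.wall p' q') (v : V) :
    ∃ g, (g ∈ G.halfspace p q ↔ v ∉ G.halfspace p q) ∧
      (g ∈ G.halfspace p' q' ↔ v ∉ G.halfspace p' q') := by
  obtain ⟨a, b, c, d, hab, hcd, hac, hbd, hab', hcd', hac', hbd'⟩ := h
  have hsep {e : V × V} (h : e ∈ G.wall p q) (h' : e ∈ G.wall p' q') : False :=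
    hne (hG.wall_eq_of_mem_of_mem hpq hpq' h h')
  have hac'' := mem_halfspace_iff_of_notMem_wall hac' (hsep · hac)
  have hbd'' := mem_halfspace_iff_of_notMem_wall hbd' (hsep · hbd)
  have hab'' := mem_halfspace_iff_of_notMem_wall hab' (hsep hab)
  have hcd'' := mem_halfspace_iff_of_notMem_wall hcd' (hsep hcd)
  obtain ⟨-, hab⟩ := mem_wall_iff.mp hab
  obtain ⟨-, hcd⟩ := mem_wall_iff.mp hcd
  obtain ⟨-, hac⟩ := mem_wall_iff.mp hac
  obtain ⟨-, hbd⟩ := mem_wall_iff.mp hbd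
  by_cases h₁ : a ∈ G.halfspace p q ↔ v ∈ G.halfspace p q <;>
    by_cases h₂ : a ∈ G.halfspace p' q' ↔ v ∈ G.halfspace p' q'
  · exact ⟨d, by grind, by grind⟩
  · exact ⟨b, by grind, by grind⟩
  · exact ⟨c, by grind, by grind⟩
  · exact ⟨a, by grind, by grind⟩

theorem hypAdjEdge (h : Transverse G u w) (hu : IsHyperplane G u) (hw : IsHyperplane G w)
    (hG : IsMedianGraph G) (hne : u ≠ w) (hvx : (v, x) ∈ u) (hvy : (v, y) ∈ w) :
    HypAdjEdge G w (v, x) := by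
  have hvx' : (v, x) ∉ w := fun h => hne (hu.eq_of_mem_of_mem hw hG hvx h)
  have hvy' : (v, y) ∉ u := fun h => hne (hu.eq_of_mem_of_mem hw hG h hvy)
  obtain ⟨p, q, hpq, rfl⟩ := hu.exists_eq_wall hG
  obtain ⟨p', q', hpq', rfl⟩ := hw.exists_eq_wall hG
  obtain ⟨g, hgu, hgw⟩ := h.exists_mem_opposite_quadrant hG hpq hpq' hne v
  obtain ⟨hvx_adj, hvx_side⟩ := mem_wall_iff.mp hvx
  obtain ⟨hvy_adj, hvy_side⟩ := mem_wall_iff.mp hvy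
  have hxw := mem_halfspace_iff_of_notMem_wall hvx_adj hvx'
  have hyu := mem_halfspace_iff_of_notMem_wall hvy_adj hvy'
  obtain ⟨z, hxzy, hxzg, hyzg⟩ := (hG.2 x y g).exists
  have hzu := hG.mem_halfspace_iff_of_dist_add_dist_eq hpq (by grind) hxzg
  have hzw := hG.mem_halfspace_iff_of_dist_add_dist_eq hpq' (by grind) hyzg
  have hzx : 0 < G.dist x z := hG.1.pos_dist_of_ne (by rintro rfl; grind)
  have hzy : 0 < G.dist z y := hG.1.pos_dist_of_ne (by rintro rfl; grind)
  have := hG.1.dist_triangle (u := x) (v := v) (w := y)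
  have : G.dist x v = 1 := dist_eq_one_iff_adj.mpr hvx_adj.symm
  have : G.dist v y = 1 := dist_eq_one_iff_adj.mpr hvy_adj
  have hxz : G.Adj x z := dist_eq_one_iff_adj.mp (by omega)
  have hzy : G.Adj z y := dist_eq_one_iff_adj.mp (by omega)
  exact ⟨y, z, hvy, mem_wall_iff.mpr ⟨hxz, by grind⟩, hzy.symm⟩

end Transverse

end

/-- if no hyperplane of `X` has an extremal vertex, then for any vertex `v`
and transverse hyperplanes `u, w` adjacent to `v` there is a hyperplane `t` adjacent to
`v`, distinct from `u` and `w`, transverse to `u` but not to `w`. -/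
theorem exists_transverse_not_transverse (G : SimpleGraph V) (hG : IsMedianGraph G)
    (hnoext : NoHypExtremalVertex G) (v : V) (u w : Set (V × V))
    (hu : u ∈ Wv G v) (hw : w ∈ Wv G v) (huw : Transverse G u w) (hne : u ≠ w) :
    ∃ t ∈ Wv G v, t ≠ u ∧ t ≠ w ∧ Transverse G t u ∧ ¬ Transverse G t w := by
  obtain ⟨x, hvx⟩ := hu.1.exists_mem_of_adjTo hG hu.2
  obtain ⟨y, hvy⟩ := hw.1.exists_mem_of_adjTo hG hw.2
  have hcone := hnoext u hu.1 (v, x) hvx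
  simp only [HypLinkCone, not_exists, not_and, not_forall] at hcone
  obtain ⟨t, ht, htu, htx, htw, hwt⟩ :=
    hcone w hw.1 hne.symm (huw.hypAdjEdge hu.1 hw.1 hG hne hvx hvy)
  obtain ⟨c, -, hvc, -, -⟩ := id htx
  exact ⟨t, ⟨ht, (v, c), hvc, .inl rfl⟩, htu, htw,
    ht.transverse_of_hypAdjEdge hu.1 hG htu hvx htx, fun h => hwt h.symm⟩
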